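/- Let d ∈ ℕ with d ≥ 2, κ ∈ ℝ \ {0}, β ∈ ℝ \ {0}, and Λ ∈ ℝ. Let X_1, …, X_d : ℝ → ℝ be twice differentiable with X_l(t) > 0 for all t, let φ be differentiable, and let ρ, p : ℝ → ℝ and V : ℝ → ℝ satisfy the Bianchi V Einstein equations (I_0), (I_1), …, (I_d) together with (I_01) for all t ∈ ℝ. Let ν ∈ ℝ \ {0}, set R = (X_1⋯X_d)^ν, let θ > 0 and q ∈ ℝ \ {0}, and let τ satisfy τ'(t) = θ R(t)^q for all t with differentiable inverse f (f(τ(t)) = t). Then: (a) the function t ↦ X_1(t)²⋯X_d(t)² · Σ_{1≤l<k≤d}(H_l(t) − H_k(t))² is constant on ℝ, where H_l = X_l'/X_l; write its value as 2dκD. (b) There exists α_1 ∈ ℝ such that X_1(t) = e^{α_1} R(t)^{1/(νd)} for all t. (c) With Y(s) = R(f(s))^q, φ̃ = φ∘f, Q(s) = (qνdκ/(d−1)) φ̃'(s)², ρ̃ = ρ∘f, and p̃ = p∘f, for every t ∈ ℝ, at s = τ(t) the function Y is twice differentiable and satisfies Y''(s) + Q(s)Y(s) = −2qνdκD/(θ²(d−1)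 Y(s)^{(2+qν)/(qν)}) − qνdβ²/(θ² e^{2α_1} Y(s)^{(2+qνd)/(qνd)}) − qνdκ(ρ̃(s) + p̃(s))/(θ²(d−1) Y(s)). -/

import Mathlib

/-!
With `N = X₁⋯X_d` and `S = ∑ H_l = N'/N`, the spatial equations `(I_i)` differ from one another
only in the term `H_i' + H_i S`, so `(N (H_i - H_j))' = 0`: squaring and summing over pairs gives
(a). The momentum constraint `(I_01)` says `S = d H_1`, i.e. `(log X_1 - (log N) / d)' = 0`, which
is (b). Summing the `(I_i)` and subtracting `d (I_0)` gives a Raychaudhuri equation for `S'` in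
which the anisotropy enters only through the constant `D`. In the time `s = τ(t)` one has
`d/ds = (θ R^q)⁻¹ d/dt` and `dY/ds = (qν/θ) S`, and the Raychaudhuri equation becomes (c).
-/

open Finset Filter Topology Real

section Pairs

variable {ι : Type*} [Fintype ι] [LinearOrder ι]

lemma two_mul_sum_pairs_of_symm {g : ι → ι → ℝ} (hg : ∀ i j, g i j = g j i) :
    2 * ∑ pr ∈ univ.filter (fun pr : ι × ι => pr.1 < pr.2), g pr.1 pr.2
      = ∑ i, ∑ j, g i j - ∑ i, g i i := by
  have split : ∀ i j, g i j = (if i < j then g i j else 0) + (if j < i then g j i else 0)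
      + (if i = j then g i j else 0) := by
    intro i j
    rcases lt_trichotomy i j with h | rfl | h
    · simp [h, h.not_gt, h.ne]
    · simp
    · simp [h, h.not_gt, h.ne', hg i j]
  have swap : ∑ i, ∑ j, (if j < i then g j i else 0) = ∑ i, ∑ j, if i < j then g i j else 0 :=
    sum_comm
  rw [sum_filter, Fintype.sum_prod_type]
  conv_rhs => enter [1, 2, i, 2, j]; rw [split i j]
  simp only [sum_add_distrib, swap, sum_ite_eq, mem_univ, if_true]
  ring

lemma sum_pairs_mul_eq (a : ι → ℝ) :
    ∑ pr ∈ univ.filter (fun pr : ι × ι => pr.1 < pr.2), a pr.1 * a pr.2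
      = ((∑ i, a i) ^ 2 - ∑ i, a i ^ 2) / 2 := by
  have h := two_mul_sum_pairs_of_symm (g := fun i j => a i * a j) fun i j => mul_comm _ _
  rw [sq, sum_mul_sum]
  simp only [← sq] at h ⊢
  linarith

lemma sum_pairs_sub_sq_eq (a : ι → ℝ) :
    ∑ pr ∈ univ.filter (fun pr : ι × ι => pr.1 < pr.2), (a pr.1 - a pr.2) ^ 2
      = Fintype.card ι * ∑ i, a i ^ 2 - (∑ i, a i) ^ 2 := by
  have h := two_mul_sum_pairs_of_symm (g := fun i j => (a i - a j) ^ 2) fun i j => by ring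
  have double : ∑ i, ∑ j, (a i - a j) ^ 2
      = 2 * (Fintype.card ι * ∑ i, a i ^ 2 - (∑ i, a i) ^ 2) := by
    simp only [sub_sq, sum_add_distrib, sum_sub_distrib, sum_const, card_univ, nsmul_eq_mul,
      ← mul_sum, ← sum_mul]
    ring
  simp only [sub_self, double, ne_eq, OfNat.ofNat_ne_zero, not_false_eq_true, zero_pow,
    sum_const_zero, sub_zero] at h
  linarith

lemma sum_comp_update_zero (a : ι → ℝ) (k : ι) {c : ℝ → ℝ} (hc : c 0 = 0) :
    ∑ i, c (Function.update a k 0 i) = ∑ i, c (a i) - c (a k) := by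
  rw [Fintype.sum_eq_add_sum_compl k, Fintype.sum_eq_add_sum_compl k (fun i => c (a i))]
  simp only [Function.update_self, hc, zero_add, add_sub_cancel_left]
  exact sum_congr rfl fun i hi => by rw [Function.update_of_ne (by simpa using hi)]

lemma sum_pairs_avoid_mul_eq (a : ι → ℝ) (k : ι) :
    ∑ pr ∈ univ.filter (fun pr : ι × ι => pr.1 < pr.2 ∧ pr.1 ≠ k ∧ pr.2 ≠ k), a pr.1 * a pr.2
      = ∑ pr ∈ univ.filter (fun pr : ι × ι => pr.1 < pr.2), a pr.1 * a pr.2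
        - a k * (∑ i, a i - a k) := by
  set b := Function.update a k 0
  have hb : ∑ pr ∈ univ.filter (fun pr : ι × ι => pr.1 < pr.2 ∧ pr.1 ≠ k ∧ pr.2 ≠ k),
      a pr.1 * a pr.2 = ∑ pr ∈ univ.filter (fun pr : ι × ι => pr.1 < pr.2), b pr.1 * b pr.2 := by
    rw [sum_filter, sum_filter]
    refine sum_congr rfl fun pr _ => ?_
    by_cases h1 : pr.1 = k <;> by_cases h2 : pr.2 = k <;> simp [b, h1, h2]
  have hsum : ∑ i, b i = ∑ i, a i - a k := sum_comp_update_zero a k (c := fun x => x) rfl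
  have hsq : ∑ i, b i ^ 2 = ∑ i, a i ^ 2 - a k ^ 2 :=
    sum_comp_update_zero a k (c := (· ^ 2)) (zero_pow two_ne_zero)
  rw [hb, sum_pairs_mul_eq, sum_pairs_mul_eq, hsum, hsq]
  ring

-- The left-hand side of `(I_i)` depends on `i` only through `bᵢ + aᵢ ∑ a`.
lemma sum_ne_add_sum_pairs_avoid_eq (a b : ι → ℝ) (i : ι) :
    (∑ l ∈ univ.filter (fun l => l ≠ i), (b l + a l ^ 2))
        + ∑ pr ∈ univ.filter (fun pr : ι × ι => pr.1 < pr.2 ∧ pr.1 ≠ i ∧ pr.2 ≠ i),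
            a pr.1 * a pr.2
      = (∑ l, (b l + a l ^ 2)) + (∑ pr ∈ univ.filter (fun pr : ι × ι => pr.1 < pr.2),
            a pr.1 * a pr.2) - (b i + a i * ∑ l, a l) := by
  rw [filter_ne', sum_erase_eq_sub (mem_univ i), sum_pairs_avoid_mul_eq]
  ring

variable {a b : ι → ℝ} {e : ℝ}

lemma sub_add_mul_sum_eq_zero_of_spatial
    (h : ∀ i, (∑ l ∈ univ.filter (fun l => l ≠ i), (b l + a l ^ 2))
        + ∑ pr ∈ univ.filter (fun pr : ι × ι => pr.1 < pr.2 ∧ pr.1 ≠ i ∧ pr.2 ≠ i),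
            a pr.1 * a pr.2 = e) (i j : ι) :
    b i - b j + (a i - a j) * ∑ l, a l = 0 := by
  have hi := h i
  have hj := h j
  rw [sum_ne_add_sum_pairs_avoid_eq] at hi hj
  linear_combination hj - hi

lemma card_sub_one_mul_eq_of_spatial
    (h : ∀ i, (∑ l ∈ univ.filter (fun l => l ≠ i), (b l + a l ^ 2))
        + ∑ pr ∈ univ.filter (fun pr : ι × ι => pr.1 < pr.2 ∧ pr.1 ≠ i ∧ pr.2 ≠ i),
            a pr.1 * a pr.2 = e) :
    (Fintype.card ι - 1) * (∑ l, b l + (∑ l, a l) ^ 2)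
      = Fintype.card ι * (∑ pr ∈ univ.filter (fun pr : ι × ι => pr.1 < pr.2),
          a pr.1 * a pr.2 + e) := by
  have hsum : ∑ i, (b i + a i * ∑ l, a l) = ∑ _i : ι, ((∑ l, (b l + a l ^ 2))
      + (∑ pr ∈ univ.filter (fun pr : ι × ι => pr.1 < pr.2), a pr.1 * a pr.2) - e) :=
    sum_congr rfl fun i _ => by linarith [h i, sum_ne_add_sum_pairs_avoid_eq a b i]
  rw [sum_const, card_univ, nsmul_eq_mul, sum_add_distrib, ← sum_mul, ← sq, sum_add_distrib,
    sum_pairs_mul_eq] at hsum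
  rw [sum_pairs_mul_eq]
  linear_combination -hsum

end Pairs

section Calculus

lemma HasDerivAt.fun_prod_mul_sum {ι : Type*} [Fintype ι] {X h : ι → ℝ → ℝ} {t : ℝ}
    (hX : ∀ l, HasDerivAt (X l) (X l t * h l t) t) :
    HasDerivAt (fun t => ∏ l, X l t) ((∏ l, X l t) * ∑ l, h l t) t := by
  classical
  refine (HasDerivAt.fun_finsetProd (u := univ) fun l _ => hX l).congr_deriv ?_
  rw [mul_sum]
  refine sum_congr rfl fun l _ => ?_
  rw [smul_eq_mul, ← mul_assoc, prod_erase_mul _ _ (mem_univ l)]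

lemma HasDerivAt.rpow_const_of_mul {N : ℝ → ℝ} {s t : ℝ} (hN : HasDerivAt N (N t * s) t)
    (hpos : 0 < N t) (m : ℝ) : HasDerivAt (fun t => N t ^ m) (N t ^ m * (m * s)) t := by
  convert hN.rpow_const (p := m) (Or.inl hpos.ne') using 1
  rw [rpow_sub_one hpos.ne']
  field_simp

lemma mul_eq_mul_of_hasDerivAt_add_mul_eq_zero {N s h h' : ℝ → ℝ}
    (hN : ∀ t, HasDerivAt N (N t * s t) t) (hh : ∀ t, HasDerivAt h (h' t) t)
    (hode : ∀ t, h' t + h t * s t = 0) (t₁ t₂ : ℝ) : N t₁ * h t₁ = N t₂ * h t₂ := by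
  have hderiv : ∀ t, HasDerivAt (fun t => N t * h t) 0 t := fun t =>
    ((hN t).mul (hh t)).congr_deriv (by linear_combination N t * hode t)
  exact is_const_of_deriv_eq_zero (fun t => (hderiv t).differentiableAt)
    (fun t => (hderiv t).deriv) t₁ t₂

lemma exists_eq_exp_mul_rpow_of_hasDerivAt {x N h : ℝ → ℝ} {c : ℝ} (hc : c ≠ 0)
    (hx : ∀ t, HasDerivAt x (x t * h t) t) (hN : ∀ t, HasDerivAt N (N t * (c * h t)) t)
    (hxpos : ∀ t, 0 < x t) (hNpos : ∀ t, 0 < N t) :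
    ∃ α, ∀ t, x t = exp α * N t ^ (1 / c) := by
  have hderiv : ∀ t, HasDerivAt (fun t => log (x t) - log (N t) / c) 0 t := fun t => by
    refine (((hx t).log (hxpos t).ne').sub
      (((hN t).log (hNpos t).ne').div_const c)).congr_deriv ?_
    field_simp [(hxpos t).ne', (hNpos t).ne']
    ring
  refine ⟨log (x 0) - log (N 0) / c, fun t => ?_⟩
  rw [← is_const_of_deriv_eq_zero (fun t => (hderiv t).differentiableAt)
    (fun t => (hderiv t).deriv) t 0, rpow_def_of_pos (hNpos t), ← exp_add, mul_one_div,
    sub_add_cancel, exp_log (hxpos t)]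

end Calculus

section TimeChange

variable {τ f : ℝ → ℝ}

lemma hasDerivAt_comp_of_leftInverse {u : ℝ → ℝ} {u' τ' t : ℝ} (hu : HasDerivAt u u' t)
    (hτ : HasDerivAt τ τ' t) (hτ' : τ' ≠ 0) (hf : DifferentiableAt ℝ f (τ t))
    (hfτ : Function.LeftInverse f τ) : HasDerivAt (fun s => u (f s)) (u' / τ') (τ t) := by
  have hid : HasDerivAt (fun t => f (τ t)) (deriv f (τ t) * τ') t := hf.hasDerivAt.comp t hτ
  simp only [hfτ _] at hid
  have hf' : deriv f (τ t) = 1 / τ' := by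
    rw [eq_div_iff hτ']
    exact hid.unique (hasDerivAt_id' t)
  rw [← hfτ t] at hu
  exact (hu.comp (τ t) hf.hasDerivAt).congr_deriv (by rw [hf', mul_one_div])

lemma range_mem_nhds_of_strictMono (hmono : StrictMono τ) (hcont : Continuous τ) (t : ℝ) :
    Set.range τ ∈ 𝓝 (τ t) := by
  refine mem_of_superset (Ioo_mem_nhds (hmono (sub_one_lt t)) (hmono (lt_add_one t))) ?_
  exact (intermediate_value_Ioo (by linarith) hcont.continuousOn).trans (Set.image_subset_range _ _)

lemma hasDerivAt_deriv_comp_leftInverse {g F F' : ℝ → ℝ} {G' t : ℝ}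
    (hτ : ∀ t, HasDerivAt τ (g t) t) (hg : ∀ t, 0 < g t) (hf : Differentiable ℝ f)
    (hfτ : Function.LeftInverse f τ) (hF : ∀ t, HasDerivAt F (F' t) t)
    (hG : HasDerivAt (fun t => F' t / g t) G' t) :
    HasDerivAt (deriv fun s => F (f s)) (G' / g t) (τ t) := by
  have hmono : StrictMono τ := strictMono_of_deriv_pos fun t => (hτ t).deriv ▸ hg t
  have hcont : Continuous τ := continuous_iff_continuousAt.2 fun t => (hτ t).continuousAt
  -- `deriv (F ∘ f)` is only known on the range of `τ`, which is a neighbourhood of `τ t`.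
  have heq : deriv (fun s => F (f s)) =ᶠ[𝓝 (τ t)] fun s => F' (f s) / g (f s) := by
    filter_upwards [range_mem_nhds_of_strictMono hmono hcont t] with s hs
    obtain ⟨u, rfl⟩ := hs
    rw [(hasDerivAt_comp_of_leftInverse (hF u) (hτ u) (hg u).ne' (hf _) hfτ).deriv, hfτ u]
  exact (hasDerivAt_comp_of_leftInverse hG (hτ t) (hg t).ne' (hf _) hfτ).congr_of_eventuallyEq heq

lemma hasDerivAt_rpow_comp_leftInverse {R s : ℝ → ℝ} {q θ s' t : ℝ} (hθ : 0 < θ)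
    (hR : ∀ t, HasDerivAt R (R t * s t) t) (hRpos : ∀ t, 0 < R t) (hs : HasDerivAt s s' t)
    (hτ : ∀ t, HasDerivAt τ (θ * R t ^ q) t) (hf : Differentiable ℝ f)
    (hfτ : Function.LeftInverse f τ) :
    HasDerivAt (fun u => R (f u) ^ q) (q / θ * s t) (τ t)
      ∧ HasDerivAt (deriv fun u => R (f u) ^ q) (q / θ * s' / (θ * R t ^ q)) (τ t) := by
  have hg : ∀ t, 0 < θ * R t ^ q := fun t => mul_pos hθ (rpow_pos_of_pos (hRpos t) q)
  have hF : ∀ t, HasDerivAt (fun t => R t ^ q) (R t ^ q * (q * s t)) t := fun t =>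
    (hR t).rpow_const_of_mul (hRpos t) q
  have hF' : (fun t => R t ^ q * (q * s t) / (θ * R t ^ q)) = fun t => q / θ * s t :=
    funext fun t => by field_simp [(rpow_pos_of_pos (hRpos t) q).ne']
  refine ⟨?_, hasDerivAt_deriv_comp_leftInverse hτ hg hf hfτ hF (hF' ▸ hs.const_mul _)⟩
  exact (hasDerivAt_comp_of_leftInverse (hF t) (hτ t) (hg t).ne' (hf _) hfτ).congr_deriv
    (congrFun hF' t)

end TimeChange

section BianchiV

lemma sq_mul_sum_pairs_sub_sq_eq {ι : Type*} [Fintype ι] [LinearOrder ι] {N : ℝ → ℝ}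
    {H H' : ι → ℝ → ℝ} (hN : ∀ t, HasDerivAt N (N t * ∑ l, H l t) t)
    (hH : ∀ l t, HasDerivAt (H l) (H' l t) t)
    (hpair : ∀ i j t, H' i t - H' j t + (H i t - H j t) * ∑ l, H l t = 0) (t₁ t₂ : ℝ) :
    N t₁ ^ 2 * ∑ pr ∈ univ.filter (fun pr : ι × ι => pr.1 < pr.2), (H pr.1 t₁ - H pr.2 t₁) ^ 2
      = N t₂ ^ 2 * ∑ pr ∈ univ.filter (fun pr : ι × ι => pr.1 < pr.2),
          (H pr.1 t₂ - H pr.2 t₂) ^ 2 := by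
  have hconst : ∀ i j, N t₁ * (H i t₁ - H j t₁) = N t₂ * (H i t₂ - H j t₂) := fun i j =>
    mul_eq_mul_of_hasDerivAt_add_mul_eq_zero (h := fun t => H i t - H j t) hN
      (fun t => (hH i t).sub (hH j t)) (hpair i j) t₁ t₂
  simp only [mul_sum, ← mul_pow, hconst]

lemma sum_eq_mul_of_momentum_constraint {d : ℕ} (hd : 0 < d) {β : ℝ} (hβ : β ≠ 0)
    (a : Fin d → ℝ)
    (h : β * (∑ l ∈ univ.filter (fun l : Fin d => l.val ≠ 0), a l)
      - ((d : ℝ) - 1) * β * a ⟨0, hd⟩ = 0) :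
    ∑ l, a l = d * a ⟨0, hd⟩ := by
  have herase : univ.filter (fun l : Fin d => l.val ≠ 0) = univ.erase ⟨0, hd⟩ := by
    ext l
    simp [Fin.ext_iff]
  rw [herase, sum_erase_eq_sub (mem_univ _)] at h
  have h' : β * (∑ l, a l - d * a ⟨0, hd⟩) = 0 := by linear_combination h
  linear_combination (mul_eq_zero.1 h').resolve_left hβ

-- The trace of the spatial equations minus `d (I_0)`, with the shear eliminated through `D`.
lemma raychaudhuri_eq {d : ℕ} {κ β Λ x φ' V ρ p N D : ℝ} {a b : Fin d → ℝ}
    (hsp : ∀ i, (∑ l ∈ univ.filter (fun l => l ≠ i), (b l + a l ^ 2))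
        + (∑ pr ∈ univ.filter (fun pr : Fin d × Fin d => pr.1 < pr.2 ∧ pr.1 ≠ i ∧ pr.2 ≠ i),
            a pr.1 * a pr.2)
        - ((d : ℝ) - 1) * ((d : ℝ) - 2) * β ^ 2 / (2 * x ^ 2)
      = -κ * (φ' ^ 2 / 2 - V + p) + Λ)
    (h0 : (∑ pr ∈ univ.filter (fun pr : Fin d × Fin d => pr.1 < pr.2), a pr.1 * a pr.2)
        - (d : ℝ) * ((d : ℝ) - 1) * β ^ 2 / (2 * x ^ 2)
      = κ * (φ' ^ 2 / 2 + V + ρ) + Λ)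
    (hD : N ^ 2 * (∑ pr ∈ univ.filter (fun pr : Fin d × Fin d => pr.1 < pr.2),
        (a pr.1 - a pr.2) ^ 2) = 2 * d * κ * D) :
    ((d : ℝ) - 1) * N ^ 2 * ∑ l, b l + 2 * d * κ * D + d * κ * N ^ 2 * φ' ^ 2
      + d * κ * N ^ 2 * (ρ + p) + d * ((d : ℝ) - 1) * β ^ 2 * N ^ 2 / x ^ 2 = 0 := by
  have htrace := card_sub_one_mul_eq_of_spatial fun i => eq_add_of_sub_eq (hsp i)
  rw [Fintype.card_fin] at htrace
  rw [sum_pairs_sub_sq_eq, Fintype.card_fin] at hD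
  have hP := sum_pairs_mul_eq a
  linear_combination N ^ 2 * htrace - hD + 2 * d * N ^ 2 * hP - d * N ^ 2 * h0

lemma ermakovPinney_eq_of_raychaudhuri {n κ β θ q ν D α N r x S' φ' ρp : ℝ} (hn : 1 < n)
    (hθ : θ ≠ 0) (hq : q ≠ 0) (hν : ν ≠ 0) (hN : 0 < N) (hr : r = N ^ ν)
    (hx : x = exp α * r ^ (1 / (ν * n)))
    (htrace : (n - 1) * N ^ 2 * S' + 2 * n * κ * D + n * κ * N ^ 2 * φ' ^ 2
      + n * κ * N ^ 2 * ρp + n * (n - 1) * β ^ 2 * N ^ 2 / x ^ 2 = 0) :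
    q / θ * (ν * S') / (θ * r ^ q) + q * ν * n * κ / (n - 1) * (φ' / (θ * r ^ q)) ^ 2 * r ^ q
      = -(2 * q * ν * n * κ * D) / (θ ^ 2 * (n - 1) * (r ^ q) ^ ((2 + q * ν) / (q * ν)))
        - q * ν * n * β ^ 2
          / (θ ^ 2 * exp (2 * α) * (r ^ q) ^ ((2 + q * ν * n) / (q * ν * n)))
        - q * ν * n * κ * ρp / (θ ^ 2 * (n - 1) * r ^ q) := by
  have hn0 : n ≠ 0 := by positivity
  have hn1 : n - 1 ≠ 0 := sub_ne_zero.2 hn.ne'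
  have hW : r ^ q = N ^ (q * ν) := by rw [hr, ← rpow_mul hN.le, mul_comm]
  have hW0 : 0 < r ^ q := hW ▸ rpow_pos_of_pos hN _
  have h1 : (r ^ q) ^ ((2 + q * ν) / (q * ν)) = N ^ 2 * r ^ q := by
    rw [hW, ← rpow_mul hN.le, show q * ν * ((2 + q * ν) / (q * ν)) = 2 + q * ν by field_simp,
      rpow_add hN, rpow_two]
  have h2 : (r ^ q) ^ ((2 + q * ν * n) / (q * ν * n)) = N ^ (2 / n) * r ^ q := by
    rw [hW, ← rpow_mul hN.le,
      show q * ν * ((2 + q * ν * n) / (q * ν * n)) = 2 / n + q * ν by field_simp, rpow_add hN]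
  have hx2 : x ^ 2 = exp (2 * α) * N ^ (2 / n) := by
    rw [hx, hr, ← rpow_mul hN.le, mul_pow, ← exp_nat_mul, ← rpow_natCast, ← rpow_mul hN.le,
      show ν * (1 / (ν * n)) * ((2 : ℕ) : ℝ) = 2 / n by push_cast; field_simp, Nat.cast_ofNat]
  rw [hx2] at htrace
  rw [h1, h2]
  field_simp at htrace ⊢
  linear_combination htrace

end BianchiV

/-- Bianchi V Einstein equations imply a generalized EMP equation. -/
theorem stmt_16
    (d : ℕ) (hd : 2 ≤ d) (κ β Λ : ℝ) (hβ : β ≠ 0)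
    (X : Fin d → ℝ → ℝ) (φ ρ p V : ℝ → ℝ)
    (hX : ∀ l, Differentiable ℝ (X l)) (hX' : ∀ l, Differentiable ℝ (deriv (X l)))
    (hXpos : ∀ l t, 0 < X l t)
    (hφ : Differentiable ℝ φ)
    (H : Fin d → ℝ → ℝ) (hH : ∀ l t, H l t = deriv (X l) t / X l t)
    (hI0 : ∀ t, (∑ pr ∈ Finset.univ.filter (fun pr : Fin d × Fin d => pr.1 < pr.2),
          H pr.1 t * H pr.2 t)
          - (d : ℝ) * ((d : ℝ) - 1) * β ^ 2 / (2 * (X ⟨0, by omega⟩ t) ^ 2)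
        = κ * ((deriv φ t) ^ 2 / 2 + V (φ t) + ρ t) + Λ)
    (hIi : ∀ i : Fin d, ∀ t,
        (∑ l ∈ Finset.univ.filter (fun l => l ≠ i), (deriv (H l) t + H l t ^ 2))
          + (∑ pr ∈ Finset.univ.filter
              (fun pr : Fin d × Fin d => pr.1 < pr.2 ∧ pr.1 ≠ i ∧ pr.2 ≠ i),
              H pr.1 t * H pr.2 t)
          - ((d : ℝ) - 1) * ((d : ℝ) - 2) * β ^ 2 / (2 * (X ⟨0, by omega⟩ t) ^ 2)
        = -κ * ((deriv φ t) ^ 2 / 2 - V (φ t) + p t) + Λ)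
    (hI01 : ∀ t, β * (∑ l ∈ Finset.univ.filter (fun l : Fin d => l.val ≠ 0), H l t)
        - ((d : ℝ) - 1) * β * H ⟨0, by omega⟩ t = 0)
    (ν : ℝ) (hν : ν ≠ 0)
    (R : ℝ → ℝ) (hR : ∀ t, R t = (∏ l, X l t) ^ ν)
    (θ q : ℝ) (hθ : 0 < θ) (hq : q ≠ 0)
    (τ f : ℝ → ℝ)
    (hτ : ∀ t, deriv τ t = θ * R t ^ q)
    (hf : Differentiable ℝ f) (hfτ : ∀ t, f (τ t) = t)
    (Y φt Q : ℝ → ℝ)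
    (hY : ∀ s, Y s = R (f s) ^ q)
    (hφt : ∀ s, φt s = φ (f s))
    (hQ : ∀ s, Q s = (q * ν * (d : ℝ) * κ / ((d : ℝ) - 1)) * (deriv φt s) ^ 2) :
    (∀ t₁ t₂,
      (∏ l, X l t₁) ^ 2 *
          (∑ pr ∈ Finset.univ.filter (fun pr : Fin d × Fin d => pr.1 < pr.2),
            (H pr.1 t₁ - H pr.2 t₁) ^ 2)
        = (∏ l, X l t₂) ^ 2 *
          (∑ pr ∈ Finset.univ.filter (fun pr : Fin d × Fin d => pr.1 < pr.2),
            (H pr.1 t₂ - H pr.2 t₂) ^ 2)) ∧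
    (∃ α₁ : ℝ, ∀ t, X ⟨0, by omega⟩ t = Real.exp α₁ * R t ^ (1 / (ν * (d : ℝ)))) ∧
    ∀ D α₁ : ℝ,
      (∀ t, (∏ l, X l t) ^ 2 *
          (∑ pr ∈ Finset.univ.filter (fun pr : Fin d × Fin d => pr.1 < pr.2),
            (H pr.1 t - H pr.2 t) ^ 2) = 2 * (d : ℝ) * κ * D) →
      (∀ t, X ⟨0, by omega⟩ t = Real.exp α₁ * R t ^ (1 / (ν * (d : ℝ)))) →
      ∀ t, DifferentiableAt ℝ Y (τ t) ∧ DifferentiableAt ℝ (deriv Y) (τ t) ∧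
        deriv (deriv Y) (τ t) + Q (τ t) * Y (τ t)
          = -(2 * q * ν * (d : ℝ) * κ * D)
              / (θ ^ 2 * ((d : ℝ) - 1) * Y (τ t) ^ ((2 + q * ν) / (q * ν)))
            - q * ν * (d : ℝ) * β ^ 2
              / (θ ^ 2 * Real.exp (2 * α₁) * Y (τ t) ^ ((2 + q * ν * (d : ℝ)) / (q * ν * (d : ℝ))))
            - q * ν * (d : ℝ) * κ * (ρ (f (τ t)) + p (f (τ t)))
              / (θ ^ 2 * ((d : ℝ) - 1) * Y (τ t)) := by
  set N : ℝ → ℝ := fun t => ∏ l, X l t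
  have hNpos : ∀ t, 0 < N t := fun t => prod_pos fun l _ => hXpos l t
  have hXd : ∀ l t, HasDerivAt (X l) (X l t * H l t) t := fun l t =>
    (hX l t).hasDerivAt.congr_deriv (by rw [hH, mul_div_cancel₀ _ (hXpos l t).ne'])
  have hHd : ∀ l t, HasDerivAt (H l) (deriv (H l) t) t := fun l t => by
    rw [show H l = fun t => deriv (X l) t / X l t from funext (hH l)]
    exact ((hX' l t).div (hX l t) (hXpos l t).ne').hasDerivAt
  have hN : ∀ t, HasDerivAt N (N t * ∑ l, H l t) t := fun t => .fun_prod_mul_sum (hXd · t)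
  have hRd : ∀ t, HasDerivAt R (R t * (ν * ∑ l, H l t)) t := fun t => by
    rw [show R = fun t => N t ^ ν from funext hR]
    exact (hN t).rpow_const_of_mul (hNpos t) ν
  have hRpos : ∀ t, 0 < R t := fun t => hR t ▸ rpow_pos_of_pos (hNpos t) ν
  refine ⟨sq_mul_sum_pairs_sub_sq_eq hN hHd fun i j t =>
    sub_add_mul_sum_eq_zero_of_spatial (fun i => eq_add_of_sub_eq (hIi i t)) i j, ?_, ?_⟩
  · obtain ⟨α, hα⟩ := exists_eq_exp_mul_rpow_of_hasDerivAt (by positivity) (hXd _)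
      (fun t => sum_eq_mul_of_momentum_constraint _ hβ _ (hI01 t) ▸ hN t) (hXpos _) hNpos
    refine ⟨α, fun t => ?_⟩
    rw [hα, hR, ← rpow_mul (hNpos t).le, show ν * (1 / (ν * d)) = 1 / d by field_simp]
  · intro D α₁ hD hα t
    obtain rfl : Y = fun s => R (f s) ^ q := funext hY
    obtain rfl : φt = fun s => φ (f s) := funext hφt
    have hg : ∀ t, 0 < θ * R t ^ q := fun t => mul_pos hθ (rpow_pos_of_pos (hRpos t) q)
    have hτd : ∀ t, HasDerivAt τ (θ * R t ^ q) t := fun t =>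
      hτ t ▸ (differentiableAt_of_deriv_ne_zero (hτ t ▸ (hg t).ne')).hasDerivAt
    obtain ⟨hY', hY''⟩ := hasDerivAt_rpow_comp_leftInverse hθ hRd hRpos
      ((HasDerivAt.fun_sum fun l _ => hHd l t).const_mul ν) hτd hf hfτ
    have hφ' := hasDerivAt_comp_of_leftInverse (hφ t).hasDerivAt (hτd t) (hg t).ne' (hf _) hfτ
    refine ⟨hY'.differentiableAt, hY''.differentiableAt, ?_⟩
    rw [hY''.deriv, hQ, hφ'.deriv]
    simp only [hfτ t]
    exact ermakovPinney_eq_of_raychaudhuri (by exact_mod_cast hd) hθ.ne' hq hν (hNpos t) (hR t)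
      (hα t) (raychaudhuri_eq (hIi · t) (hI0 t) (hD t))
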